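/- Let ρ : ℝ → ℝ be smooth with ρ(t) = 1 for t ≤ ε₀/2 and ρ(t) = 0 for t ≥ ε₀, where 0 < ε₀. For λ ≥ 1, |μ| ≥ 1 and τ ∈ ℝ, define w_{λ,μ}(τ) = (sgn μ)/(i(λ+iμ)) ∫₀^∞ (1−ρ(t)) e^{i(sgn μ)λ t} e^{−|μ| t} cos(tτ) dt. Then for every N ∈ ℕ there is a constant C_N (depending on ρ and N but not on λ, μ, τ) with |w_{λ,μ}(τ)| ≤ C_N λ^{-1} ((1+|λ−τ|)^{-N} + (1+|λ+τ|)^{-N}). -/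

import Mathlib

open Complex MeasureTheory Set Filter

-- deriv vanishes where f is constant on a left ray
lemma my_deriv_zero_Iic {f : ℝ → ℂ} {a : ℝ} {c : ℂ} (hf : Differentiable ℝ f)
    (h : ∀ t ≤ a, f t = c) : ∀ t ≤ a, deriv f t = 0 := by
  intro t ht
  rcases eq_or_lt_of_le ht with rfl | ht'
  · have h2 : HasDerivWithinAt f 0 (Iic t) t := by
      exact (hasDerivWithinAt_const t _ c).congr (fun y hy => h y hy) (h t le_rfl)
    have h1 : HasDerivWithinAt f (deriv f t) (Iic t) t :=
      (hf t).hasDerivAt.hasDerivWithinAt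
    have := h2.deriv_eq_zero (uniqueDiffOn_Iic t t Set.self_mem_Iic)
    exact this
  · have he : f =ᶠ[nhds t] fun _ => c := by
      filter_upwards [Iio_mem_nhds ht'] with y hy using h y hy.le
    rw [he.deriv_eq, deriv_const]

lemma my_deriv_zero_Ici {f : ℝ → ℂ} {a : ℝ} {c : ℂ} (hf : Differentiable ℝ f)
    (h : ∀ t ≥ a, f t = c) : ∀ t ≥ a, deriv f t = 0 := by
  intro t ht
  rcases eq_or_lt_of_le ht with rfl | ht'
  · have h2 : HasDerivWithinAt f 0 (Ici a) a :=
      (hasDerivWithinAt_const a _ c).congr (fun y hy => h y hy) (h a le_rfl)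
    exact h2.deriv_eq_zero (uniqueDiffOn_Ici a a Set.self_mem_Ici)
  · have he : f =ᶠ[nhds t] fun _ => c := by
      filter_upwards [Ioi_mem_nhds ht'] with y hy using h y hy.le
    rw [he.deriv_eq, deriv_const]

-- integrability of g * exp(z t) on Ioi 0 for bounded continuous g, Re z ≤ -1
lemma my_integrable {g : ℝ → ℂ} {z : ℂ} {M : ℝ} (hg : Continuous g)
    (hM : ∀ t, ‖g t‖ ≤ M) (hz : z.re ≤ -1) :
    IntegrableOn (fun t : ℝ => g t * Complex.exp (z * t)) (Set.Ioi (0:ℝ)) := by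
  have hint : IntegrableOn (fun t : ℝ => M * Real.exp (-1 * t)) (Set.Ioi (0:ℝ)) :=
    (exp_neg_integrableOn_Ioi 0 one_pos).const_mul M
  refine hint.mono' ?_ ?_
  · exact (hg.mul (Complex.continuous_exp.comp (continuous_const.mul Complex.continuous_ofReal))).aestronglyMeasurable
  · filter_upwards [self_mem_ae_restrict measurableSet_Ioi] with t ht
    have h1 : ‖Complex.exp (z * t)‖ = Real.exp (z.re * t) := by
      rw [Complex.norm_exp]
      congr 1
      simp [Complex.mul_re]
    rw [norm_mul, h1]
    have ht0 : (0:ℝ) ≤ t := (le_of_lt ht)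
    have : Real.exp (z.re * t) ≤ Real.exp (-1 * t) :=
      Real.exp_le_exp.2 (by nlinarith)
    calc ‖g t‖ * Real.exp (z.re * t) ≤ M * Real.exp (-1 * t) := by
          apply mul_le_mul (hM t) this (Real.exp_nonneg _) ((norm_nonneg _).trans (hM t))

-- tendsto 0 at top
lemma my_tendsto {g : ℝ → ℂ} {z : ℂ} {M : ℝ}
    (hM : ∀ t, ‖g t‖ ≤ M) (hz : z.re ≤ -1) :
    Tendsto (fun t : ℝ => g t * Complex.exp (z * t)) atTop (nhds 0) := by
  have hlim : Tendsto (fun t : ℝ => M * Real.exp (-1 * t)) atTop (nhds 0) := by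
    have h1 : Tendsto (fun t : ℝ => Real.exp (-1 * t)) atTop (nhds 0) :=
      Real.tendsto_exp_atBot.comp (by
        exact (tendsto_neg_atTop_atBot).congr (fun x => by ring))
    simpa using h1.const_mul M
  apply squeeze_zero_norm' ?_ hlim
  · filter_upwards [eventually_ge_atTop (0:ℝ)] with t ht
    have h1 : ‖Complex.exp (z * t)‖ = Real.exp (z.re * t) := by
      rw [Complex.norm_exp]; congr 1; simp [Complex.mul_re]
    rw [norm_mul, h1]
    have : Real.exp (z.re * t) ≤ Real.exp (-1 * t) := Real.exp_le_exp.2 (by nlinarith)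
    exact mul_le_mul (hM t) this (Real.exp_nonneg _) ((norm_nonneg _).trans (hM t))

-- one-step integration by parts
lemma my_ibp {g : ℝ → ℂ} {z : ℂ} {M M' : ℝ} (hgd : Differentiable ℝ g)
    (hdc : Continuous (deriv g))
    (hM : ∀ t, ‖g t‖ ≤ M) (hM' : ∀ t, ‖deriv g t‖ ≤ M')
    (hz : z.re ≤ -1) (hg0 : g 0 = 0) :
    ∫ t in Set.Ioi (0:ℝ), g t * Complex.exp (z * t) =
      -z⁻¹ * ∫ t in Set.Ioi (0:ℝ), deriv g t * Complex.exp (z * t) := by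
  have hzne : z ≠ 0 := by
    intro h; rw [h] at hz; norm_num at hz
  -- F t = z⁻¹ * (g t * exp (z t))
  have hF : ∀ t : ℝ, HasDerivAt (fun t : ℝ => z⁻¹ * (g t * Complex.exp (z * t)))
      (z⁻¹ * (deriv g t * Complex.exp (z * t)) + g t * Complex.exp (z * t)) t := by
    intro t
    have he : HasDerivAt (fun t : ℝ => Complex.exp (z * t)) (z * Complex.exp (z * t)) t := by
      have h1 : HasDerivAt (fun w : ℂ => Complex.exp (z * w)) (z * Complex.exp (z * t)) (t : ℂ) := by
        have h2 := (Complex.hasDerivAt_exp (z * t)).comp (t:ℂ)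
          ((hasDerivAt_id (t:ℂ)).const_mul z)
        exact h2.congr_deriv (by rw [mul_one, mul_comm])
      exact h1.comp_ofReal
    have := ((hgd t).hasDerivAt.mul he).const_mul z⁻¹
    refine this.congr_deriv ?_
    linear_combination (g t * Complex.exp (z * t)) * inv_mul_cancel₀ hzne
  have hint1 : IntegrableOn (fun t : ℝ => g t * Complex.exp (z * t)) (Set.Ioi (0:ℝ)) :=
    my_integrable hgd.continuous hM hz
  have hint2 : IntegrableOn (fun t : ℝ => deriv g t * Complex.exp (z * t)) (Set.Ioi (0:ℝ)) :=
    my_integrable hdc hM' hz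
  have hint : IntegrableOn
      (fun t : ℝ => z⁻¹ * (deriv g t * Complex.exp (z * t)) + g t * Complex.exp (z * t))
      (Set.Ioi (0:ℝ)) := (hint2.const_mul _).add hint1
  have hten : Tendsto (fun t : ℝ => z⁻¹ * (g t * Complex.exp (z * t))) atTop (nhds 0) := by
    simpa using (my_tendsto hM hz).const_mul z⁻¹
  have key := integral_Ioi_of_hasDerivAt_of_tendsto
    (f := fun t : ℝ => z⁻¹ * (g t * Complex.exp (z * t)))
    (f' := fun t : ℝ => z⁻¹ * (deriv g t * Complex.exp (z * t)) + g t * Complex.exp (z * t))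
    (a := 0) (m := 0)
    (hF 0).continuousAt.continuousWithinAt (fun x _ => hF x) hint hten
  rw [MeasureTheory.integral_add (hint2.const_mul _) hint1, MeasureTheory.integral_const_mul] at key
  simp only [hg0, zero_mul, sub_zero] at key
  have : ∫ t in Set.Ioi (0:ℝ), g t * Complex.exp (z * t) =
      - (z⁻¹ * ∫ t in Set.Ioi (0:ℝ), deriv g t * Complex.exp (z * t)) := by
    linear_combination key
  rw [this]; ring

-- iterated integration by parts
lemma my_ibp_iter {f : ℝ → ℂ} {z : ℂ} (hf : ContDiff ℝ (⊤ : ℕ∞) f)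
    (hbd : ∀ n : ℕ, ∃ M, ∀ t, ‖iteratedDeriv n f t‖ ≤ M)
    (h0 : ∀ n : ℕ, iteratedDeriv n f 0 = 0)
    (hz : z.re ≤ -1) (N : ℕ) :
    ∫ t in Set.Ioi (0:ℝ), f t * Complex.exp (z * t) =
      (-z⁻¹) ^ N * ∫ t in Set.Ioi (0:ℝ), iteratedDeriv N f t * Complex.exp (z * t) := by
  induction N with
  | zero => simp
  | succ n ih =>
    obtain ⟨M, hM⟩ := hbd n
    obtain ⟨M', hM'⟩ := hbd (n + 1)
    have hgd : Differentiable ℝ (iteratedDeriv n f) :=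
      hf.differentiable_iteratedDeriv n (by exact_mod_cast ENat.coe_lt_top n)
    have hdc : Continuous (deriv (iteratedDeriv n f)) := by
      rw [← iteratedDeriv_succ]
      exact hf.continuous_iteratedDeriv (n+1) (by exact_mod_cast le_top)
    have step := my_ibp (g := iteratedDeriv n f) (z := z) hgd hdc hM
      (fun t => by rw [← iteratedDeriv_succ]; exact hM' t) hz (h0 n)
    rw [ih, step, iteratedDeriv_succ, pow_succ]
    ring

-- bound on the integral
lemma my_norm_integral_le {g : ℝ → ℂ} {z : ℂ} {M : ℝ} (hg : Continuous g)
    (hM : ∀ t, ‖g t‖ ≤ M) (hz : z.re ≤ -1) :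
    ‖∫ t in Set.Ioi (0:ℝ), g t * Complex.exp (z * t)‖ ≤ M := by
  have hM0 : 0 ≤ M := (norm_nonneg _).trans (hM 0)
  have hb : ∀ t ∈ Set.Ioi (0:ℝ), ‖g t * Complex.exp (z * t)‖ ≤ M * Real.exp (-1 * t) := by
    intro t ht
    have h1 : ‖Complex.exp (z * t)‖ = Real.exp (z.re * t) := by
      rw [Complex.norm_exp]; congr 1; simp [Complex.mul_re]
    rw [norm_mul, h1]
    have ht0 : (0:ℝ) ≤ t := le_of_lt ht
    have : Real.exp (z.re * t) ≤ Real.exp (-1 * t) := Real.exp_le_exp.2 (by nlinarith)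
    exact mul_le_mul (hM t) this (Real.exp_nonneg _) hM0
  have hint : IntegrableOn (fun t : ℝ => M * Real.exp (-1 * t)) (Set.Ioi (0:ℝ)) :=
    (exp_neg_integrableOn_Ioi 0 one_pos).const_mul M
  calc ‖∫ t in Set.Ioi (0:ℝ), g t * Complex.exp (z * t)‖
      ≤ ∫ t in Set.Ioi (0:ℝ), M * Real.exp (-1 * t) := by
        apply norm_integral_le_of_norm_le hint
        filter_upwards [self_mem_ae_restrict measurableSet_Ioi] with t ht using hb t ht
    _ = M * ∫ t in Set.Ioi (0:ℝ), Real.exp (-t) := by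
        rw [MeasureTheory.integral_const_mul]; norm_num
    _ = M := by rw [integral_exp_neg_Ioi_zero, mul_one]

section f_props
variable {ε₀ : ℝ} (hε₀ : 0 < ε₀) {ρ : ℝ → ℝ} (hρ : ContDiff ℝ (⊤ : ℕ∞) ρ)
  (hρ1 : ∀ t ≤ ε₀ / 2, ρ t = 1) (hρ0 : ∀ t ≥ ε₀, ρ t = 0)

include hρ in
lemma my_f_contDiff : ContDiff ℝ (⊤ : ℕ∞) (fun t : ℝ => (1 : ℂ) - (ρ t : ℂ)) :=
  contDiff_const.sub (Complex.ofRealCLM.contDiff.comp hρ)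

include hρ hρ1 in
lemma my_f_vanish_left : ∀ n : ℕ, ∀ t ≤ ε₀ / 2,
    iteratedDeriv n (fun t : ℝ => (1 : ℂ) - (ρ t : ℂ)) t = 0 := by
  intro n
  induction n with
  | zero => intro t ht; simp [hρ1 t ht]
  | succ n ih =>
    intro t ht
    rw [iteratedDeriv_succ]
    exact my_deriv_zero_Iic
      ((my_f_contDiff hρ).differentiable_iteratedDeriv n (by exact_mod_cast ENat.coe_lt_top n)) ih t ht

include hρ hρ0 in
lemma my_f_vanish_right : ∀ n : ℕ, ∀ t ≥ ε₀,
    iteratedDeriv (n+1) (fun t : ℝ => (1 : ℂ) - (ρ t : ℂ)) t = 0 := by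
  intro n
  induction n with
  | zero =>
    intro t ht
    rw [iteratedDeriv_succ, iteratedDeriv_zero]
    exact my_deriv_zero_Ici (c := 1)
      ((my_f_contDiff hρ).differentiable (by simp))
      (fun y hy => by simp [hρ0 y hy]) t ht
  | succ n ih =>
    intro t ht
    rw [iteratedDeriv_succ]
    exact my_deriv_zero_Ici
      ((my_f_contDiff hρ).differentiable_iteratedDeriv (n+1)
        (by exact_mod_cast ENat.coe_lt_top (n+1))) ih t ht

include hε₀ hρ hρ1 hρ0 in
lemma my_f_bound : ∀ n : ℕ, ∃ M, 0 ≤ M ∧ ∀ t : ℝ,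
    ‖iteratedDeriv n (fun t : ℝ => (1 : ℂ) - (ρ t : ℂ)) t‖ ≤ M := by
  intro n
  set f : ℝ → ℂ := fun t : ℝ => (1 : ℂ) - (ρ t : ℂ) with hfdef
  have hcont : Continuous (iteratedDeriv n f) :=
    (my_f_contDiff hρ).continuous_iteratedDeriv n (by exact_mod_cast le_top)
  obtain ⟨M, hM⟩ := (isCompact_Icc (a := ε₀/2) (b := ε₀)).exists_bound_of_continuousOn
    hcont.continuousOn
  refine ⟨max M 1, le_max_of_le_right zero_le_one, fun t => ?_⟩
  rcases le_or_gt t (ε₀/2) with h1 | h1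
  · rw [my_f_vanish_left hρ hρ1 n t h1]
    simpa using le_max_of_le_right (zero_le_one)
  rcases le_or_gt t ε₀ with h2 | h2
  · exact le_max_of_le_left (hM t ⟨h1.le, h2⟩)
  · rcases Nat.eq_zero_or_pos n with rfl | hn
    · have : f t = 1 := by simp [hfdef, hρ0 t h2.le]
      rw [iteratedDeriv_zero, this]
      simpa using le_max_of_le_right le_rfl
    · obtain ⟨m, rfl⟩ := Nat.exists_eq_succ_of_ne_zero hn.ne'
      rw [my_f_vanish_right hρ hρ0 m t h2.le]
      simpa using le_max_of_le_right (zero_le_one)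

end f_props

lemma my_z_re (a μ : ℝ) : (Complex.I * (a:ℂ) - ((|μ|:ℝ):ℂ)).re = -|μ| := by simp

lemma my_z_bound (a μ : ℝ) (hμ : 1 ≤ |μ|) (N : ℕ) :
    ‖(-(Complex.I * (a:ℂ) - ((|μ|:ℝ):ℂ))⁻¹) ^ N‖ ≤ 2 ^ N * ((1 + |a|) ^ N)⁻¹ := by
  set z : ℂ := Complex.I * (a:ℂ) - ((|μ|:ℝ):ℂ) with hz
  have hre : z.re = -|μ| := by simp [hz]
  have him : z.im = a := by simp [hz]
  have h1 : (1:ℝ) ≤ ‖z‖ := by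
    calc (1:ℝ) ≤ |μ| := hμ
    _ = |z.re| := by rw [hre, abs_neg]; exact (_root_.abs_abs μ).symm
    _ ≤ ‖z‖ := Complex.abs_re_le_norm z
  have h2 : |a| ≤ ‖z‖ := by rw [← him]; exact Complex.abs_im_le_norm z
  have hzpos : (0:ℝ) < ‖z‖ := lt_of_lt_of_le one_pos h1
  have ha : (0:ℝ) < 1 + |a| := by positivity
  have hinv : ‖z⁻¹‖ ≤ 2 / (1 + |a|) := by
    rw [norm_inv, inv_le_comm₀ hzpos (by positivity), inv_div]
    rw [div_le_iff₀ (by norm_num : (0:ℝ) < 2)]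
    linarith
  calc ‖(-z⁻¹) ^ N‖ = ‖z⁻¹‖ ^ N := by rw [norm_pow, norm_neg]
  _ ≤ (2 / (1 + |a|)) ^ N := pow_le_pow_left₀ (norm_nonneg _) hinv N
  _ = 2 ^ N * ((1 + |a|) ^ N)⁻¹ := by rw [div_pow, div_eq_mul_inv]

theorem stmt9 (ε₀ : ℝ) (hε₀ : 0 < ε₀) (ρ : ℝ → ℝ) (hρ : ContDiff ℝ (⊤ : ℕ∞) ρ)
    (hρ1 : ∀ t ≤ ε₀ / 2, ρ t = 1) (hρ0 : ∀ t ≥ ε₀, ρ t = 0)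
    (w : ℝ → ℝ → ℝ → ℂ)
    (hw : ∀ lam μ τ : ℝ, w lam μ τ =
      (Real.sign μ : ℂ) / (Complex.I * ((lam : ℂ) + Complex.I * μ)) *
        ∫ t in Set.Ioi (0 : ℝ),
          ((1 : ℂ) - (ρ t : ℂ)) * Complex.exp (Complex.I * (Real.sign μ : ℂ) * lam * t) *
            Complex.exp (-(((|μ| : ℝ) : ℂ)) * t) * (Real.cos (t * τ) : ℂ)) :
    ∀ N : ℕ, ∃ C : ℝ, 0 < C ∧ ∀ lam μ τ : ℝ, 1 ≤ lam → 1 ≤ |μ| →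
      ‖w lam μ τ‖ ≤ C * lam⁻¹ *
        ((1 + |lam - τ|) ^ (-(N : ℝ)) + (1 + |lam + τ|) ^ (-(N : ℝ))) := by
  intro N
  set f : ℝ → ℂ := fun t : ℝ => (1 : ℂ) - (ρ t : ℂ) with hfdef
  have hfc : ContDiff ℝ (⊤ : ℕ∞) f := my_f_contDiff hρ
  have hbd : ∀ n : ℕ, ∃ M, ∀ t, ‖iteratedDeriv n f t‖ ≤ M := fun n => by
    obtain ⟨M, _, hM⟩ := my_f_bound hε₀ hρ hρ1 hρ0 n; exact ⟨M, hM⟩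
  have h0 : ∀ n : ℕ, iteratedDeriv n f 0 = 0 := fun n =>
    my_f_vanish_left hρ hρ1 n 0 (by linarith)
  obtain ⟨M, hM0, hM⟩ := my_f_bound hε₀ hρ hρ1 hρ0 N
  obtain ⟨M₀, hM₀0, hM₀'⟩ := my_f_bound hε₀ hρ hρ1 hρ0 0
  have hM₀ : ∀ t, ‖f t‖ ≤ M₀ := fun t => by simpa using hM₀' t
  have hNcont : Continuous (iteratedDeriv N f) := hfc.continuous_iteratedDeriv N (by exact_mod_cast le_top)
  refine ⟨2 ^ N * (M + 1), by positivity, ?_⟩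
  intro lam μ τ hlam hμ
  have hμ0 : μ ≠ 0 := fun h => by rw [h] at hμ; simp at hμ; linarith
  set s : ℝ := Real.sign μ with hs
  have hs1 : s = 1 ∨ s = -1 := by
    rcases lt_or_gt_of_ne hμ0 with h | h
    · right; rw [hs, Real.sign_of_neg h]
    · left; rw [hs, Real.sign_of_pos h]
  set z₁ : ℂ := Complex.I * ((s * lam + τ : ℝ) : ℂ) - ((|μ| : ℝ) : ℂ) with hz₁
  set z₂ : ℂ := Complex.I * ((s * lam - τ : ℝ) : ℂ) - ((|μ| : ℝ) : ℂ) with hz₂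
  have hre₁ : z₁.re ≤ -1 := by rw [hz₁, my_z_re]; linarith
  have hre₂ : z₂.re ≤ -1 := by rw [hz₂, my_z_re]; linarith
  -- pointwise identity
  have key : ∀ t : ℝ,
      f t * Complex.exp (Complex.I * (s : ℂ) * lam * t) *
        Complex.exp (-(((|μ| : ℝ) : ℂ)) * t) * (Real.cos (t * τ) : ℂ)
      = (f t * Complex.exp (z₁ * t) + f t * Complex.exp (z₂ * t)) / 2 := by
    intro t
    rw [Complex.ofReal_cos, Complex.cos,
      show z₁ * t = Complex.I * (s : ℂ) * lam * t + -(((|μ| : ℝ) : ℂ)) * t + (t * τ : ℂ) * Complex.I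
        by rw [hz₁]; push_cast; ring,
      show z₂ * t = Complex.I * (s : ℂ) * lam * t + -(((|μ| : ℝ) : ℂ)) * t + -((t * τ : ℂ) * Complex.I)
        by rw [hz₂]; push_cast; ring,
      Complex.exp_add, Complex.exp_add, Complex.exp_add, Complex.exp_add]
    push_cast
    ring
  have hint₁ : IntegrableOn (fun t : ℝ => f t * Complex.exp (z₁ * t)) (Set.Ioi (0:ℝ)) :=
    my_integrable hfc.continuous hM₀ hre₁
  have hint₂ : IntegrableOn (fun t : ℝ => f t * Complex.exp (z₂ * t)) (Set.Ioi (0:ℝ)) :=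
    my_integrable hfc.continuous hM₀ hre₂
  have hJ : (∫ t in Set.Ioi (0:ℝ),
      f t * Complex.exp (Complex.I * (s : ℂ) * lam * t) *
        Complex.exp (-(((|μ| : ℝ) : ℂ)) * t) * (Real.cos (t * τ) : ℂ))
      = ((∫ t in Set.Ioi (0:ℝ), f t * Complex.exp (z₁ * t)) +
         (∫ t in Set.Ioi (0:ℝ), f t * Complex.exp (z₂ * t))) / 2 := by
    rw [MeasureTheory.integral_congr_ae (Filter.Eventually.of_forall key)]
    rw [MeasureTheory.integral_div, MeasureTheory.integral_add hint₁ hint₂]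
  -- bounds on the two pieces
  have hb : ∀ z : ℂ, z.re ≤ -1 →
      ‖∫ t in Set.Ioi (0:ℝ), f t * Complex.exp (z * t)‖ ≤ ‖(-z⁻¹) ^ N‖ * M := by
    intro z hzre
    rw [my_ibp_iter hfc hbd h0 hzre N, norm_mul]
    exact mul_le_mul_of_nonneg_left (my_norm_integral_le hNcont hM hzre) (norm_nonneg _)
  have hb₁ := (hb z₁ hre₁).trans
    (mul_le_mul_of_nonneg_right (my_z_bound (s * lam + τ) μ hμ N) hM0)
  have hb₂ := (hb z₂ hre₂).trans
    (mul_le_mul_of_nonneg_right (my_z_bound (s * lam - τ) μ hμ N) hM0)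
  -- prefactor
  have hpref : ‖(s : ℂ) / (Complex.I * ((lam : ℂ) + Complex.I * μ))‖ ≤ lam⁻¹ := by
    rw [norm_div, norm_mul, Complex.norm_I, one_mul]
    have hnum : ‖(s : ℂ)‖ = 1 := by rcases hs1 with h | h <;> simp [h]
    have hden : lam ≤ ‖(lam : ℂ) + Complex.I * μ‖ := by
      have hre : ((lam : ℂ) + Complex.I * μ).re = lam := by simp
      calc lam = |((lam : ℂ) + Complex.I * μ).re| := by rw [hre, abs_of_pos (by linarith)]
      _ ≤ ‖(lam : ℂ) + Complex.I * μ‖ := Complex.abs_re_le_norm _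
    rw [hnum]
    rw [div_le_iff₀ (by linarith : (0:ℝ) < ‖(lam : ℂ) + Complex.I * μ‖)]
    rw [inv_mul_eq_div, le_div_iff₀ (by linarith : (0:ℝ) < lam)]
    linarith
  -- rpow conversion
  have hA : (1 + |lam - τ|) ^ (-(N : ℝ)) = ((1 + |lam - τ|) ^ N)⁻¹ := by
    rw [← Real.rpow_natCast (1 + |lam - τ|) N, ← Real.rpow_neg (by positivity)]
  have hB : (1 + |lam + τ|) ^ (-(N : ℝ)) = ((1 + |lam + τ|) ^ N)⁻¹ := by
    rw [← Real.rpow_natCast (1 + |lam + τ|) N, ← Real.rpow_neg (by positivity)]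
  -- assemble
  rw [hw lam μ τ, ← hs]
  have hwnorm : ‖(s : ℂ) / (Complex.I * ((lam : ℂ) + Complex.I * μ)) *
      ∫ t in Set.Ioi (0 : ℝ), f t * Complex.exp (Complex.I * (s : ℂ) * lam * t) *
        Complex.exp (-(((|μ| : ℝ) : ℂ)) * t) * (Real.cos (t * τ) : ℂ)‖
      ≤ lam⁻¹ * ((2 ^ N * ((1 + |s * lam + τ|) ^ N)⁻¹ * M +
                  2 ^ N * ((1 + |s * lam - τ|) ^ N)⁻¹ * M) / 2) := by
    rw [norm_mul, hJ]
    apply mul_le_mul hpref ?_ (norm_nonneg _) (by positivity)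
    rw [norm_div]
    simp only [Complex.norm_ofNat]
    apply div_le_div_of_nonneg_right ?_ (by norm_num)
    · exact (norm_add_le _ _).trans (add_le_add hb₁ hb₂)
  refine hwnorm.trans ?_
  rw [hA, hB]
  have hfin : ∀ a b : ℝ, 0 ≤ a → 0 ≤ b →
      lam⁻¹ * ((2 ^ N * ((1 + a) ^ N)⁻¹ * M + 2 ^ N * ((1 + b) ^ N)⁻¹ * M) / 2)
      ≤ 2 ^ N * (M + 1) * lam⁻¹ * (((1 + b) ^ N)⁻¹ + ((1 + a) ^ N)⁻¹) := by
    intro a b ha0 hb0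
    have h1 : (0:ℝ) < ((1 + a) ^ N)⁻¹ := by positivity
    have h2 : (0:ℝ) < ((1 + b) ^ N)⁻¹ := by positivity
    have hl : (0:ℝ) < lam⁻¹ := by positivity
    have e1 : lam⁻¹ * ((2 ^ N * ((1 + a) ^ N)⁻¹ * M + 2 ^ N * ((1 + b) ^ N)⁻¹ * M) / 2)
        = 2 ^ N * (M / 2) * lam⁻¹ * (((1 + b) ^ N)⁻¹ + ((1 + a) ^ N)⁻¹) := by ring
    rw [e1]
    have : (0:ℝ) ≤ (((1 + b) ^ N)⁻¹ + ((1 + a) ^ N)⁻¹) := by positivity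
    apply mul_le_mul_of_nonneg_right ?_ this
    apply mul_le_mul_of_nonneg_right ?_ hl.le
    apply mul_le_mul_of_nonneg_left ?_ (by positivity)
    linarith
  rcases hs1 with h | h
  · have e1 : |s * lam + τ| = |lam + τ| := by rw [h, one_mul]
    have e2 : |s * lam - τ| = |lam - τ| := by rw [h, one_mul]
    rw [e1, e2]
    exact hfin _ _ (abs_nonneg _) (abs_nonneg _)
  · have e1 : |s * lam + τ| = |lam - τ| := by
      rw [h, show -1 * lam + τ = -(lam - τ) by ring, abs_neg]
    have e2 : |s * lam - τ| = |lam + τ| := by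
      rw [h, show -1 * lam - τ = -(lam + τ) by ring, abs_neg]
    rw [e1, e2, add_comm (((1 + |lam - τ|) ^ N)⁻¹) (((1 + |lam + τ|) ^ N)⁻¹)]
    exact hfin _ _ (abs_nonneg _) (abs_nonneg _)
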